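/- With the notation of the displacement equation for Hankel-like moment matrices: let R_n(t) = [s_{k,j}]_{t≤k,j≤t+n} be invertible positive definite matrices, let a^t = (a^t_{n,0},...,a^t_{n,n}) satisfy R_n(t) a^t = (0,...,0,(a^t_{n,n})^{-1})ᵀ with a^t_{n,n} > 0, and b^t = (b^t_{n,0},...,b^t_{n,n}) satisfy R_n(t) b^t = ((b^t_{n,0})^{-1},0,...,0)ᵀ with b^t_{n,0} > 0. Define H_n(t) as the 2×(n+1) matrix with first row (conj(a^{t+1}_{n,0}),...,conj(a^{t+1}_{n,n−1}), a^{t+1}_{n,n}) and second row (conj(b^t_{n,1}),...,conj(b^t_{n,n}), 0), F_n(t) the lower shift, J = diag(1,−1). Then R_n(t+1)^{-1} − F_n(t)* R_n(t)^{-1} F_n(t) = H_n(t)* J H_n(t). -/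

import Mathlib

/-
Put `A = R_n(t+1)`, `B = R_n(t)` and let `F` be the lower shift. Both matrices are windows of the
same kernel, one step apart, so `A Fᴴ` and `Fᴴ B` agree outside the first column and the last row.
The normalisation of `b = b^t` makes `Y = B⁻¹ - b bᴴ` Hermitian with vanishing first row and column
(it is the inverse of the trailing `n × n` block of `B`, padded by zeros). Hence `Fᴴ Y F` is
Hermitian, kills `e_n`, and `A Fᴴ Y F` differs from the identity only in its last row. These three
properties characterise `A⁻¹ - u uᴴ` for `u = a^{t+1}`, so
`A⁻¹ - Fᴴ B⁻¹ F = u uᴴ - (Fᴴ b)(Fᴴ b)ᴴ`, which is `Hᴴ J H`.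
-/

open Matrix

open scoped ComplexConjugate ComplexOrder

lemma Fin.single_last_eq_ite {M : Type*} [Zero M] {n : ℕ} (x : Fin (n + 1) → M) :
    Pi.single (Fin.last n) (x (Fin.last n)) = fun i : Fin (n + 1) => if (i : ℕ) = n then x i else 0 := by
  ext i
  by_cases h : (i : ℕ) = n
  · obtain rfl : i = Fin.last n := Fin.ext h
    simp
  · simp [h, Fin.ext_iff]

lemma Fin.single_zero_eq_ite {M : Type*} [Zero M] {n : ℕ} (x : Fin (n + 1) → M) :
    Pi.single 0 (x 0) = fun i : Fin (n + 1) => if (i : ℕ) = 0 then x i else 0 := by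
  ext i
  by_cases h : (i : ℕ) = 0
  · obtain rfl : i = 0 := Fin.ext h
    simp
  · simp [h, Fin.ext_iff]

namespace Matrix

variable {R : Type*}

def lowerShift (R : Type*) [Zero R] [One R] (n : ℕ) : Matrix (Fin (n + 1)) (Fin (n + 1)) R :=
  of fun i j => if (i : ℕ) = j + 1 then 1 else 0

section LowerShift

variable [Semiring R] {n : ℕ} {κ : Type*}

lemma lowerShift_mulVec_single_last : lowerShift R n *ᵥ Pi.single (Fin.last n) 1 = 0 := by
  ext i
  simp [lowerShift, mulVec, dotProduct, Pi.single_apply]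
  omega

variable [StarRing R]

lemma conjTranspose_lowerShift_apply (i j : Fin (n + 1)) :
    (lowerShift R n)ᴴ i j = if (j : ℕ) = i + 1 then 1 else 0 := by
  simp [lowerShift, apply_ite star]

lemma conjTranspose_lowerShift_mulVec_castSucc (x : Fin (n + 1) → R) (i : Fin n) :
    ((lowerShift R n)ᴴ *ᵥ x) i.castSucc = x i.succ := by
  have h (j : Fin (n + 1)) : (j : ℕ) = i.castSucc + 1 ↔ j = i.succ := by simp [Fin.ext_iff]
  simp only [mulVec, dotProduct, conjTranspose_lowerShift_apply, h, ite_mul, one_mul, zero_mul,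
    Finset.sum_ite_eq', Finset.mem_univ, if_true]

lemma conjTranspose_lowerShift_mulVec_last (x : Fin (n + 1) → R) :
    ((lowerShift R n)ᴴ *ᵥ x) (Fin.last n) = 0 := by
  have h (j : Fin (n + 1)) : (j : ℕ) ≠ Fin.last n + 1 := by simp; omega
  simp only [mulVec, dotProduct, conjTranspose_lowerShift_apply, h, if_false, zero_mul,
    Finset.sum_const_zero]

lemma conjTranspose_lowerShift_mulVec (x : Fin (n + 1) → R) :
    (lowerShift R n)ᴴ *ᵥ x = fun i : Fin (n + 1) => if h : (i : ℕ) + 1 ≤ n then x ⟨i + 1, Nat.lt_succ_of_le h⟩ else 0 := by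
  ext i
  induction i using Fin.lastCases with
  | last => simp [conjTranspose_lowerShift_mulVec_last]
  | cast i => simp [conjTranspose_lowerShift_mulVec_castSucc, Fin.succ, Nat.succ_le_of_lt i.isLt]

lemma conjTranspose_lowerShift_mulVec_single_zero :
    (lowerShift R n)ᴴ *ᵥ Pi.single 0 1 = 0 := by
  ext i
  induction i using Fin.lastCases with
  | last => exact conjTranspose_lowerShift_mulVec_last _
  | cast i => simp [conjTranspose_lowerShift_mulVec_castSucc]

lemma conjTranspose_lowerShift_mul_apply_castSucc (M : Matrix (Fin (n + 1)) κ R) (i : Fin n)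
    (k : κ) : ((lowerShift R n)ᴴ * M) i.castSucc k = M i.succ k :=
  conjTranspose_lowerShift_mulVec_castSucc (fun j => M j k) i

lemma conjTranspose_lowerShift_mul_apply_last (M : Matrix (Fin (n + 1)) κ R) (k : κ) :
    ((lowerShift R n)ᴴ * M) (Fin.last n) k = 0 :=
  conjTranspose_lowerShift_mulVec_last (fun j => M j k)

lemma mul_conjTranspose_lowerShift_apply_succ (M : Matrix κ (Fin (n + 1)) R) (i : κ)
    (k : Fin n) : (M * (lowerShift R n)ᴴ) i k.succ = M i k.castSucc := by
  have h (j : Fin (n + 1)) : (k.succ : ℕ) = j + 1 ↔ j = k.castSucc := by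
    simp [Fin.ext_iff, eq_comm]
  simp only [mul_apply, conjTranspose_lowerShift_apply, h, mul_ite, mul_one, mul_zero,
    Finset.sum_ite_eq', Finset.mem_univ, if_true]

end LowerShift

lemma conjTranspose_lowerShift_mul_lowerShift [Ring R] [StarRing R] {n : ℕ} :
    (lowerShift R n)ᴴ * lowerShift R n =
      1 - vecMulVec (Pi.single (Fin.last n) 1) (Pi.single (Fin.last n) 1) := by
  ext i k
  induction i using Fin.lastCases with
  | last =>
    rw [conjTranspose_lowerShift_mul_apply_last]
    simp [vecMulVec_apply, one_apply, Pi.single_apply, eq_comm]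
  | cast i =>
    rw [conjTranspose_lowerShift_mul_apply_castSucc, sub_apply, vecMulVec_apply,
      Pi.single_eq_of_ne (Fin.castSucc_lt_last i).ne]
    simp [one_apply, lowerShift, Fin.ext_iff]

lemma exists_eq_vecMulVec_single_add_vecMulVec_single [Semiring R] {ι κ : Type*} [DecidableEq ι]
    [DecidableEq κ] (D : Matrix ι κ R) (i₀ : ι) (k₀ : κ)
    (hD : ∀ i k, i ≠ i₀ → k ≠ k₀ → D i k = 0) :
    ∃ c w, D = vecMulVec c (Pi.single k₀ 1) + vecMulVec (Pi.single i₀ 1) w := by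
  refine ⟨fun i => D i k₀, Function.update (D i₀) k₀ 0, ?_⟩
  ext i k
  by_cases hi : i = i₀ <;> by_cases hk : k = k₀ <;> simp [vecMulVec_apply, hi, hk, hD]

/-- The window `R_n(t) = [s_{k,j}]_{t ≤ k,j ≤ t+n}` of a kernel `s` on `ℕ`. -/
def momentBlock (s : ℕ → ℕ → R) (n t : ℕ) : Matrix (Fin (n + 1)) (Fin (n + 1)) R :=
  of fun i j => s (t + i) (t + j)

lemma exists_momentBlock_succ_mul_conjTranspose_lowerShift [Ring R] [StarRing R]
    (s : ℕ → ℕ → R) (n t : ℕ) :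
    ∃ c w, momentBlock s n (t + 1) * (lowerShift R n)ᴴ =
      (lowerShift R n)ᴴ * momentBlock s n t + vecMulVec c (Pi.single 0 1) +
        vecMulVec (Pi.single (Fin.last n) 1) w := by
  obtain ⟨c, w, hcw⟩ := exists_eq_vecMulVec_single_add_vecMulVec_single
    (momentBlock s n (t + 1) * (lowerShift R n)ᴴ - (lowerShift R n)ᴴ * momentBlock s n t)
    (Fin.last n) 0 (fun i k hi hk => by
      obtain ⟨i, rfl⟩ := Fin.exists_castSucc_eq.mpr hi
      obtain ⟨k, rfl⟩ := Fin.exists_succ_eq.mpr hk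
      rw [sub_apply, mul_conjTranspose_lowerShift_apply_succ,
        conjTranspose_lowerShift_mul_apply_castSucc, sub_eq_zero]
      simp only [momentBlock, of_apply, Fin.val_castSucc, Fin.val_succ]
      congr 1 <;> ring)
  exact ⟨c, w, by rw [add_assoc, ← hcw, add_sub_cancel]⟩

section RankOneCorrection

variable {K : Type*} [Field K] {ι : Type*} [Fintype ι] [DecidableEq ι]
  {A : Matrix ι ι K} {u : ι → K} {i : ι}

lemma inv_mulVec_single_of_mulVec_eq_single (hdet : IsUnit A.det)
    (hu : A *ᵥ u = Pi.single i (u i)⁻¹) (hui : u i ≠ 0) :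
    A⁻¹ *ᵥ Pi.single i 1 = u i • u := by
  have h : A *ᵥ (u i • u) = Pi.single i 1 := by
    rw [mulVec_smul, hu, ← Pi.single_smul', smul_eq_mul, mul_inv_cancel₀ hui]
  rw [← h, mulVec_mulVec, nonsing_inv_mul A hdet, one_mulVec]

variable [StarRing K]

lemma vecMulVec_eq_zero_of_isHermitian {r : ι → K} (hu : u i ≠ 0)
    (hH : (vecMulVec u r).IsHermitian) (hi : vecMulVec u r *ᵥ Pi.single i 1 = 0) :
    vecMulVec u r = 0 := by
  have hri : r i = 0 := by
    simpa [vecMulVec_apply, hu] using congrFun hi i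
  ext k j
  have hij : u i * r j = 0 := by
    rw [← vecMulVec_apply, ← hH.apply, vecMulVec_apply, hri, mul_zero, star_zero]
  simp [vecMulVec_apply, (mul_eq_zero.mp hij).resolve_left hu]

lemma isHermitian_inv_sub_vecMulVec_star (hA : A.IsHermitian) (u : ι → K) :
    (A⁻¹ - vecMulVec u (star u)).IsHermitian := by
  refine hA.inv.sub ?_
  simp [IsHermitian, conjTranspose_vecMulVec]

lemma inv_sub_vecMulVec_star_mulVec_single (hdet : IsUnit A.det)
    (hu : A *ᵥ u = Pi.single i (u i)⁻¹) (hui : star (u i) = u i) (hui0 : u i ≠ 0) :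
    (A⁻¹ - vecMulVec u (star u)) *ᵥ Pi.single i 1 = 0 := by
  rw [sub_mulVec, inv_mulVec_single_of_mulVec_eq_single hdet hu hui0, vecMulVec_mulVec,
    dotProduct_single, mul_one, Pi.star_apply, hui, op_smul_eq_smul, sub_self]

lemma mul_inv_sub_vecMulVec_star (hdet : IsUnit A.det) (hu : A *ᵥ u = Pi.single i (u i)⁻¹) :
    A * (A⁻¹ - vecMulVec u (star u)) =
      1 - vecMulVec (Pi.single i 1) ((u i)⁻¹ • star u) := by
  rw [mul_sub, mul_nonsing_inv A hdet, mul_vecMulVec, hu, vecMulVec_smul, ← smul_vecMulVec,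
    ← Pi.single_smul', smul_eq_mul, mul_one]

lemma eq_inv_sub_vecMulVec_star {Z : Matrix ι ι K} {q : ι → K} (hA : A.IsHermitian)
    (hdet : IsUnit A.det) (hu : A *ᵥ u = Pi.single i (u i)⁻¹) (hui : star (u i) = u i)
    (hui0 : u i ≠ 0) (hZ : Z.IsHermitian) (hZi : Z *ᵥ Pi.single i 1 = 0)
    (hAZ : A * Z = 1 - vecMulVec (Pi.single i 1) q) :
    Z = A⁻¹ - vecMulVec u (star u) := by
  set r := u i • ((u i)⁻¹ • star u - q)
  have hD : Z - (A⁻¹ - vecMulVec u (star u)) = vecMulVec u r := by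
    have hAD : A * (Z - (A⁻¹ - vecMulVec u (star u))) =
        vecMulVec (Pi.single i 1) ((u i)⁻¹ • star u - q) := by
      rw [mul_sub, hAZ, mul_inv_sub_vecMulVec_star hdet hu, vecMulVec_sub]
      abel
    rw [← nonsing_inv_mul_cancel_left A (Z - (A⁻¹ - vecMulVec u (star u))) hdet, hAD,
      mul_vecMulVec, inv_mulVec_single_of_mulVec_eq_single hdet hu hui0, smul_vecMulVec,
      vecMulVec_smul]
  refine sub_eq_zero.mp (hD ▸ vecMulVec_eq_zero_of_isHermitian hui0 ?_ ?_)
  · rw [← hD]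
    exact hZ.sub (isHermitian_inv_sub_vecMulVec_star hA u)
  · rw [← hD, sub_mulVec, hZi, inv_sub_vecMulVec_star_mulVec_single hdet hu hui hui0, sub_zero]

end RankOneCorrection

theorem inv_sub_conjTranspose_lowerShift_mul_inv_mul_lowerShift {K : Type*} [Field K]
    [StarRing K] {n : ℕ} {A B : Matrix (Fin (n + 1)) (Fin (n + 1)) K}
    (hA : A.IsHermitian) (hAdet : IsUnit A.det) (hB : B.IsHermitian) (hBdet : IsUnit B.det)
    {c w : Fin (n + 1) → K}
    (hAB : A * (lowerShift K n)ᴴ = (lowerShift K n)ᴴ * B + vecMulVec c (Pi.single 0 1) +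
      vecMulVec (Pi.single (Fin.last n) 1) w)
    {u v : Fin (n + 1) → K}
    (hu : A *ᵥ u = Pi.single (Fin.last n) (u (Fin.last n))⁻¹)
    (hun : star (u (Fin.last n)) = u (Fin.last n)) (hun0 : u (Fin.last n) ≠ 0)
    (hv : B *ᵥ v = Pi.single 0 (v 0)⁻¹) (hv0 : star (v 0) = v 0) (hv00 : v 0 ≠ 0) :
    A⁻¹ - (lowerShift K n)ᴴ * B⁻¹ * lowerShift K n =
      vecMulVec u (star u) -
        vecMulVec ((lowerShift K n)ᴴ *ᵥ v) (star ((lowerShift K n)ᴴ *ᵥ v)) := by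
  set F := lowerShift K n
  set Y := B⁻¹ - vecMulVec v (star v)
  have hY : Y.IsHermitian := isHermitian_inv_sub_vecMulVec_star hB v
  have hY0 : Pi.single 0 1 ᵥ* Y = 0 := by
    rw [← hY.eq, vecMul_conjTranspose, ← Pi.single_star, star_one,
      inv_sub_vecMulVec_star_mulVec_single hBdet hv hv0 hv00, star_zero]
  have hAY : A * (Fᴴ * Y * F) = 1 - vecMulVec (Pi.single (Fin.last n) 1)
      (Pi.single (Fin.last n) 1 - w ᵥ* Y ᵥ* F) := calc
    A * (Fᴴ * Y * F) = (A * Fᴴ) * Y * F := by simp only [mul_assoc]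
    _ = Fᴴ * (B * Y) * F + vecMulVec c (Pi.single 0 1 ᵥ* Y ᵥ* F) +
        vecMulVec (Pi.single (Fin.last n) 1) (w ᵥ* Y ᵥ* F) := by
      rw [hAB]
      simp only [add_mul, vecMulVec_mul, mul_assoc]
    _ = Fᴴ * F + vecMulVec (Pi.single (Fin.last n) 1) (w ᵥ* Y ᵥ* F) := by
      rw [mul_inv_sub_vecMulVec_star hBdet hv, hY0, mul_sub, sub_mul, mul_one, mul_vecMulVec,
        conjTranspose_lowerShift_mulVec_single_zero]
      simp
    _ = _ := by
      rw [conjTranspose_lowerShift_mul_lowerShift, vecMulVec_sub]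
      abel
  have hP : Fᴴ * Y * F = A⁻¹ - vecMulVec u (star u) :=
    eq_inv_sub_vecMulVec_star hA hAdet hu hun hun0 (isHermitian_conjTranspose_mul_mul F hY)
      (by rw [← mulVec_mulVec, lowerShift_mulVec_single_last, mulVec_zero]) hAY
  have hBY : Fᴴ * B⁻¹ * F = Fᴴ * Y * F + vecMulVec (Fᴴ *ᵥ v) (star (Fᴴ *ᵥ v)) := by
    rw [star_mulVec, conjTranspose_conjTranspose, ← vecMulVec_mul, ← mul_vecMulVec, ← add_mul,
      ← mul_add, sub_add_cancel]
  rw [hBY, hP]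
  abel

lemma conjTranspose_mul_diag_one_neg_one_mul {K : Type*} [Ring K] [StarRing K] {ι : Type*}
    [Fintype ι] (M : Matrix (Fin 2) ι K) :
    Mᴴ * (!![1, 0; 0, -1] : Matrix (Fin 2) (Fin 2) K) * M =
      vecMulVec (star (M 0)) (M 0) - vecMulVec (star (M 1)) (M 1) := by
  ext i j
  simp [mul_apply, Fin.sum_univ_two, vecMulVec_apply, sub_eq_add_neg]

end Matrix

/-- Displacement structure of the inverses of the moment matrices, in terms of the
coefficients of the orthonormal polynomials.  With `R_n(t) = [s_{k,j}]_{t ≤ k,j ≤ t+n}`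
positive definite, `a^t` the coefficient vector of the orthonormal polynomial
(`R_n(t) a^t = (0,…,0,(a^t_{n,n})⁻¹)ᵀ`, `a^t_{n,n} > 0`), `b^t` the coefficient vector of
the reversed polynomial (`R_n(t) b^t = ((b^t_{n,0})⁻¹,0,…,0)ᵀ`, `b^t_{n,0} > 0`),
`H_n(t)` the `2 × (n+1)` matrix with rows
`(conj a^{t+1}_{n,0}, …, conj a^{t+1}_{n,n-1}, a^{t+1}_{n,n})` and
`(conj b^t_{n,1}, …, conj b^t_{n,n}, 0)`, `F_n(t)` the lower shift and `J = diag(1,-1)`: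
`R_n(t+1)⁻¹ - F_n(t)* R_n(t)⁻¹ F_n(t) = H_n(t)* J H_n(t)`. -/
theorem stmt15 (s : ℕ → ℕ → ℂ) (n : ℕ)
    (R : ℕ → Matrix (Fin (n + 1)) (Fin (n + 1)) ℂ)
    (hR : R = fun t => Matrix.of fun (i j : Fin (n + 1)) => s (t + i) (t + j))
    (hpd : ∀ t, (R t).PosDef)
    (a b : ℕ → Fin (n + 1) → ℂ)
    (ha : ∀ t, (R t).mulVec (a t) =
      fun (i : Fin (n + 1)) => if (i : ℕ) = n then (a t i)⁻¹ else 0)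
    (hapos : ∀ t, 0 < a t (Fin.last n))
    (hb : ∀ t, (R t).mulVec (b t) =
      fun (i : Fin (n + 1)) => if (i : ℕ) = 0 then (b t i)⁻¹ else 0)
    (hbpos : ∀ t, 0 < b t 0)
    (F : Matrix (Fin (n + 1)) (Fin (n + 1)) ℂ)
    (hF : F = Matrix.of fun (i j : Fin (n + 1)) => if (i : ℕ) = (j : ℕ) + 1 then 1 else 0)
    (J : Matrix (Fin 2) (Fin 2) ℂ) (hJ : J = !![1, 0; 0, -1])
    (H : ℕ → Matrix (Fin 2) (Fin (n + 1)) ℂ)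
    (hH : H = fun t => Matrix.of fun (r : Fin 2) (i : Fin (n + 1)) =>
      if (r : ℕ) = 0 then
        (if (i : ℕ) = n then a (t + 1) i else conj (a (t + 1) i))
      else
        (if h : (i : ℕ) + 1 ≤ n then conj (b t ⟨(i : ℕ) + 1, by omega⟩) else 0)) :
    ∀ t : ℕ, (R (t + 1))⁻¹ - Fᴴ * (R t)⁻¹ * F = (H t)ᴴ * J * H t := by
  intro t
  have hRt (t : ℕ) : R t = momentBlock s n t := by rw [hR]; rfl
  have hdet (t : ℕ) : IsUnit (R t).det := (isUnit_iff_isUnit_det _).mp (hpd t).isUnit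
  have hFl : F = lowerShift ℂ n := hF
  have hun : star (a (t + 1) (Fin.last n)) = a (t + 1) (Fin.last n) :=
    (hapos _).le.isSelfAdjoint.star_eq
  obtain ⟨c, w, hAB⟩ := exists_momentBlock_succ_mul_conjTranspose_lowerShift s n t
  rw [← hRt, ← hRt] at hAB
  have hH0 : H t 0 = star (a (t + 1)) := by
    ext i
    by_cases hi : (i : ℕ) = n
    · obtain rfl : i = Fin.last n := Fin.ext hi
      simp [hH, hun]
    · simp [hH, hi]
  have hH1 : H t 1 = star (Fᴴ *ᵥ b t) := by
    ext i
    rw [hFl, conjTranspose_lowerShift_mulVec, hH]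
    simp [apply_dite star]
  rw [hJ, conjTranspose_mul_diag_one_neg_one_mul, hH0, hH1, star_star, star_star, hFl]
  exact inv_sub_conjTranspose_lowerShift_mul_inv_mul_lowerShift (hpd _).isHermitian (hdet _)
    (hpd t).isHermitian (hdet t) hAB ((ha _).trans (Fin.single_last_eq_ite _).symm) hun
    (hapos _).ne' ((hb t).trans (Fin.single_zero_eq_ite _).symm)
    (hbpos t).le.isSelfAdjoint.star_eq (hbpos t).ne'
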